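/- GL_0(G)* (identified with M_c(G)**) is a left ideal, or a right ideal, of (M(G)**, ⊙) if and only if G is compact. -/

import Mathlib

set_option linter.unusedSectionVars false
set_option linter.unusedVariables false

open MeasureTheory ENNReal Complex Filter Set Topology

noncomputable section

namespace GLpaper

variable (G : Type) [Group G] [TopologicalSpace G] [MeasurableSpace G]

def cmAbs (μ : ComplexMeasure G) : Measure G :=
  (ComplexMeasure.re μ).totalVariation + (ComplexMeasure.im μ).totalVariation

instance (μ : ComplexMeasure G) : IsFiniteMeasure (cmAbs G μ) := by
  unfold cmAbs SignedMeasure.totalVariation; infer_instance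

structure MG where
  toCM : ComplexMeasure G
  regular : (cmAbs G toCM).Regular

def cInt (μ : ComplexMeasure G) (g : G → ℂ) : ℂ :=
  ((∫ x, g x ∂(ComplexMeasure.re μ).toJordanDecomposition.posPart) -
      ∫ x, g x ∂(ComplexMeasure.re μ).toJordanDecomposition.negPart) +
    Complex.I * ((∫ x, g x ∂(ComplexMeasure.im μ).toJordanDecomposition.posPart) -
      ∫ x, g x ∂(ComplexMeasure.im μ).toJordanDecomposition.negPart)

structure GenFun where
  toFun : ∀ μ : MG G, Lp ℂ ⊤ (cmAbs G μ.toCM)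
  compat : ∀ μ ν : MG G, cmAbs G μ.toCM ≪ cmAbs G ν.toCM →
    ⇑(toFun μ) =ᵐ[cmAbs G μ.toCM] ⇑(toFun ν)
  bdd : BddAbove (Set.range fun μ : MG G => ‖toFun μ‖)

namespace GenFun

variable {G}

theorem ext' {f g : GenFun G} (h : ∀ μ, f.toFun μ = g.toFun μ) : f = g := by
  cases f; cases g
  simp only [GenFun.mk.injEq]
  exact funext h

instance : Zero (GenFun G) where
  zero :=
  { toFun := fun _ => 0
    compat := by
      intro μ ν h
      filter_upwards [Lp.coeFn_zero ℂ ⊤ (cmAbs G μ.toCM),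
        (Lp.coeFn_zero ℂ ⊤ (cmAbs G ν.toCM)).filter_mono h.ae_le] with x e1 e2
      rw [e1, e2]
    bdd := ⟨0, by rintro r ⟨μ, rfl⟩; simp⟩ }

instance : Add (GenFun G) where
  add f g :=
  { toFun := fun μ => f.toFun μ + g.toFun μ
    compat := by
      intro μ ν h
      filter_upwards [f.compat μ ν h, g.compat μ ν h,
        Lp.coeFn_add (f.toFun μ) (g.toFun μ),
        (Lp.coeFn_add (f.toFun ν) (g.toFun ν)).filter_mono h.ae_le] with x e1 e2 e3 e4
      simp only [e3, e4, Pi.add_apply, e1, e2]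
    bdd := by
      obtain ⟨Cf, hCf⟩ := f.bdd
      obtain ⟨Cg, hCg⟩ := g.bdd
      refine ⟨Cf + Cg, ?_⟩
      rintro r ⟨μ, rfl⟩
      exact (norm_add_le _ _).trans (add_le_add (hCf ⟨μ, rfl⟩) (hCg ⟨μ, rfl⟩)) }

instance : Neg (GenFun G) where
  neg f :=
  { toFun := fun μ => -f.toFun μ
    compat := by
      intro μ ν h
      filter_upwards [f.compat μ ν h, Lp.coeFn_neg (f.toFun μ),
        (Lp.coeFn_neg (f.toFun ν)).filter_mono h.ae_le] with x e1 e2 e3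
      simp only [e2, e3, Pi.neg_apply, e1]
    bdd := by
      obtain ⟨Cf, hCf⟩ := f.bdd
      refine ⟨Cf, ?_⟩
      rintro r ⟨μ, rfl⟩
      simpa using hCf ⟨μ, rfl⟩ }

instance : SMul ℂ (GenFun G) where
  smul c f :=
  { toFun := fun μ => c • f.toFun μ
    compat := by
      intro μ ν h
      filter_upwards [f.compat μ ν h, Lp.coeFn_smul c (f.toFun μ),
        (Lp.coeFn_smul c (f.toFun ν)).filter_mono h.ae_le] with x e1 e2 e3
      simp only [e2, e3, Pi.smul_apply, e1]
    bdd := by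
      obtain ⟨Cf, hCf⟩ := f.bdd
      refine ⟨‖c‖ * Cf, ?_⟩
      rintro r ⟨μ, rfl⟩
      show ‖c • f.toFun μ‖ ≤ ‖c‖ * Cf
      rw [norm_smul]
      exact mul_le_mul_of_nonneg_left (hCf ⟨μ, rfl⟩) (norm_nonneg c) }

@[simp] theorem zero_toFun (μ : MG G) : (0 : GenFun G).toFun μ = 0 := rfl
@[simp] theorem add_toFun (f g : GenFun G) (μ : MG G) :
    (f + g).toFun μ = f.toFun μ + g.toFun μ := rfl
@[simp] theorem neg_toFun (f : GenFun G) (μ : MG G) : (-f).toFun μ = -f.toFun μ := rfl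
@[simp] theorem smul_toFun (c : ℂ) (f : GenFun G) (μ : MG G) :
    (c • f).toFun μ = c • f.toFun μ := rfl

instance : AddCommGroup (GenFun G) where
  add_assoc a b c := ext' fun μ => add_assoc _ _ _
  zero_add a := ext' fun μ => zero_add _
  add_zero a := ext' fun μ => add_zero _
  add_comm a b := ext' fun μ => add_comm _ _
  neg_add_cancel a := ext' fun μ => neg_add_cancel _
  nsmul := nsmulRec
  zsmul := zsmulRec

instance : Module ℂ (GenFun G) where
  one_smul f := ext' fun μ => one_smul _ _
  mul_smul a b f := ext' fun μ => mul_smul _ _ _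
  smul_zero a := ext' fun μ => smul_zero _
  smul_add a f g := ext' fun μ => smul_add _ _ _
  add_smul a b f := ext' fun μ => add_smul _ _ _
  zero_smul f := ext' fun μ => zero_smul _ _

/-- The norm on generalised functions. -/
def gnorm (f : GenFun G) : ℝ := ⨆ μ : MG G, ‖f.toFun μ‖

theorem gnorm_zero : gnorm (0 : GenFun G) = 0 := by
  rcases isEmpty_or_nonempty (MG G) with h | h
  · exact Real.iSup_of_isEmpty _
  · simp [gnorm]

theorem norm_le_gnorm (f : GenFun G) (μ : MG G) : ‖f.toFun μ‖ ≤ gnorm f :=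
  le_ciSup f.bdd μ

theorem gnorm_nonneg (f : GenFun G) : 0 ≤ gnorm f := by
  rcases isEmpty_or_nonempty (MG G) with h | h
  · rw [gnorm, Real.iSup_of_isEmpty]
  · exact le_trans (norm_nonneg _) (norm_le_gnorm f (Classical.arbitrary _))

theorem gnorm_le {f : GenFun G} {C : ℝ} (h0 : 0 ≤ C) (h : ∀ μ, ‖f.toFun μ‖ ≤ C) :
    gnorm f ≤ C := by
  rcases isEmpty_or_nonempty (MG G) with hh | hh
  · rw [gnorm, Real.iSup_of_isEmpty]; exact h0
  · exact ciSup_le h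

instance : NormedAddCommGroup (GenFun G) :=
  AddGroupNorm.toNormedAddCommGroup
  { toFun := gnorm
    map_zero' := gnorm_zero
    add_le' := by
      intro f g
      refine gnorm_le (add_nonneg (gnorm_nonneg f) (gnorm_nonneg g)) fun μ => ?_
      rw [add_toFun]
      exact (norm_add_le _ _).trans (add_le_add (norm_le_gnorm f μ) (norm_le_gnorm g μ))
    neg' := by
      intro f
      unfold gnorm
      congr 1
      funext μ
      rw [neg_toFun, norm_neg]
    eq_zero_of_map_eq_zero' := by
      intro f hf
      refine ext' fun μ => ?_
      have h1 : ‖f.toFun μ‖ ≤ 0 := hf ▸ norm_le_gnorm f μ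
      have : ‖f.toFun μ‖ = 0 := le_antisymm h1 (norm_nonneg _)
      simpa [norm_eq_zero] using this }

theorem norm_def (f : GenFun G) : ‖f‖ = gnorm f := rfl

instance : NormedSpace ℂ (GenFun G) where
  norm_smul_le c f := by
    refine gnorm_le (mul_nonneg (norm_nonneg c) (gnorm_nonneg f)) fun μ => ?_
    rw [smul_toFun, norm_smul]
    exact mul_le_mul_of_nonneg_left (norm_le_gnorm f μ) (norm_nonneg c)

end GenFun

/-- A generalised function vanishes at infinity. -/
def MemGL0 (f : GenFun G) : Prop :=
  ∀ ε : ℝ, 0 < ε → ∃ K : Set G, IsCompact K ∧ ∀ μ : MG G,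
    eLpNorm (Kᶜ.indicator ⇑(f.toFun μ)) ⊤ (cmAbs G μ.toCM) < ENNReal.ofReal ε

variable [T2Space G] [BorelSpace G]

theorem indicator_norm_mono {K L : Set G} (hKL : K ⊆ L) (g : G → ℂ) (x : G) :
    ‖Lᶜ.indicator g x‖ ≤ ‖Kᶜ.indicator g x‖ := by
  by_cases hx : x ∈ Lᶜ
  · rw [Set.indicator_of_mem hx, Set.indicator_of_mem (Set.compl_subset_compl.mpr hKL hx)]
  · rw [Set.indicator_of_notMem hx]
    simp [norm_nonneg]

/-- The space `GL₀(G)` of generalised functions vanishing at infinity, as a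
subspace of `GL(G)`. -/
def GL0 : Submodule ℂ (GenFun G) where
  carrier := {f | MemGL0 G f}
  zero_mem' := by
    intro ε hε
    refine ⟨∅, isCompact_empty, fun μ => ?_⟩
    have h0 : (∅ᶜ : Set G).indicator ⇑((0 : GenFun G).toFun μ)
        =ᵐ[cmAbs G μ.toCM] (0 : G → ℂ) := by
      filter_upwards [Lp.coeFn_zero ℂ ⊤ (cmAbs G μ.toCM)] with x e1
      by_cases hx : x ∈ (∅ᶜ : Set G)
      · rw [Set.indicator_of_mem hx]; exact e1
      · rw [Set.indicator_of_notMem hx]; rfl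
    rw [eLpNorm_congr_ae h0, eLpNorm_zero]
    exact ENNReal.ofReal_pos.mpr hε
  add_mem' := by
    intro f g hf hg ε hε
    obtain ⟨Kf, hKf, hf'⟩ := hf (ε / 2) (by linarith)
    obtain ⟨Kg, hKg, hg'⟩ := hg (ε / 2) (by linarith)
    refine ⟨Kf ∪ Kg, hKf.union hKg, fun μ => ?_⟩
    have hmeas : MeasurableSet ((Kf ∪ Kg)ᶜ : Set G) :=
      ((hKf.union hKg).isClosed.measurableSet).compl
    have hsum : ((Kf ∪ Kg)ᶜ : Set G).indicator ⇑((f + g).toFun μ)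
        =ᵐ[cmAbs G μ.toCM]
        ((Kf ∪ Kg)ᶜ : Set G).indicator ⇑(f.toFun μ) +
        ((Kf ∪ Kg)ᶜ : Set G).indicator ⇑(g.toFun μ) := by
      filter_upwards [Lp.coeFn_add (f.toFun μ) (g.toFun μ)] with x e1
      by_cases hx : x ∈ ((Kf ∪ Kg)ᶜ : Set G)
      · simp only [Set.indicator_of_mem hx, Pi.add_apply, GenFun.add_toFun]
        rw [e1]; rfl
      · simp only [Pi.add_apply, Set.indicator_of_notMem hx, add_zero]
    calc eLpNorm (((Kf ∪ Kg)ᶜ : Set G).indicator ⇑((f + g).toFun μ)) ⊤ (cmAbs G μ.toCM)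
        = eLpNorm (((Kf ∪ Kg)ᶜ : Set G).indicator ⇑(f.toFun μ) +
            ((Kf ∪ Kg)ᶜ : Set G).indicator ⇑(g.toFun μ)) ⊤ (cmAbs G μ.toCM) :=
          eLpNorm_congr_ae hsum
      _ ≤ eLpNorm (((Kf ∪ Kg)ᶜ : Set G).indicator ⇑(f.toFun μ)) ⊤ (cmAbs G μ.toCM) +
            eLpNorm (((Kf ∪ Kg)ᶜ : Set G).indicator ⇑(g.toFun μ)) ⊤ (cmAbs G μ.toCM) :=
          eLpNorm_add_le ((Lp.aestronglyMeasurable (f.toFun μ)).indicator hmeas)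
            ((Lp.aestronglyMeasurable (g.toFun μ)).indicator hmeas) le_top
      _ ≤ eLpNorm ((Kfᶜ : Set G).indicator ⇑(f.toFun μ)) ⊤ (cmAbs G μ.toCM) +
            eLpNorm ((Kgᶜ : Set G).indicator ⇑(g.toFun μ)) ⊤ (cmAbs G μ.toCM) := by
          gcongr
          · exact eLpNorm_mono fun x => indicator_norm_mono G Set.subset_union_left _ x
          · exact eLpNorm_mono fun x => indicator_norm_mono G Set.subset_union_right _ x
      _ < ENNReal.ofReal (ε / 2) + ENNReal.ofReal (ε / 2) :=
          ENNReal.add_lt_add (hf' μ) (hg' μ)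
      _ = ENNReal.ofReal ε := by
          rw [← ENNReal.ofReal_add (by linarith) (by linarith)]
          norm_num
  smul_mem' := by
    intro c f hf ε hε
    obtain ⟨K, hK, hf'⟩ := hf (ε / (‖c‖ + 1)) (by positivity)
    refine ⟨K, hK, fun μ => ?_⟩
    have hsmul : (Kᶜ : Set G).indicator ⇑((c • f).toFun μ)
        =ᵐ[cmAbs G μ.toCM] c • (Kᶜ : Set G).indicator ⇑(f.toFun μ) := by
      filter_upwards [Lp.coeFn_smul c (f.toFun μ)] with x e1
      by_cases hx : x ∈ (Kᶜ : Set G)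
      · simp only [Set.indicator_of_mem hx, Pi.smul_apply, GenFun.smul_toFun]
        rw [e1]; rfl
      · simp only [Pi.smul_apply, Set.indicator_of_notMem hx, smul_zero]
    calc eLpNorm ((Kᶜ : Set G).indicator ⇑((c • f).toFun μ)) ⊤ (cmAbs G μ.toCM)
        = (‖c‖₊ : ℝ≥0∞) * eLpNorm ((Kᶜ : Set G).indicator ⇑(f.toFun μ)) ⊤ (cmAbs G μ.toCM) := by
          rw [eLpNorm_congr_ae hsmul, eLpNorm_const_smul]; rfl
      _ ≤ ENNReal.ofReal ‖c‖ * ENNReal.ofReal (ε / (‖c‖ + 1)) := by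
          rw [_root_.ofReal_norm]
          exact mul_le_mul' le_rfl (hf' μ).le
      _ = ENNReal.ofReal (‖c‖ * (ε / (‖c‖ + 1))) :=
          (ENNReal.ofReal_mul (norm_nonneg c)).symm
      _ < ENNReal.ofReal ε := by
          refine (ENNReal.ofReal_lt_ofReal_iff hε).mpr ?_
          have hpos : (0 : ℝ) < ‖c‖ + 1 := by positivity
          rw [mul_div_assoc', div_lt_iff₀ hpos]
          nlinarith [norm_nonneg c]


section Pairing

theorem rePos_le (μ : ComplexMeasure G) :
    (ComplexMeasure.re μ).toJordanDecomposition.posPart ≤ cmAbs G μ :=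
  (Measure.le_add_right (le_refl _) :
      (ComplexMeasure.re μ).toJordanDecomposition.posPart ≤ (ComplexMeasure.re μ).totalVariation).trans
    (Measure.le_add_right (le_refl _))

theorem reNeg_le (μ : ComplexMeasure G) :
    (ComplexMeasure.re μ).toJordanDecomposition.negPart ≤ cmAbs G μ :=
  (Measure.le_add_left (le_refl _) :
      (ComplexMeasure.re μ).toJordanDecomposition.negPart ≤ (ComplexMeasure.re μ).totalVariation).trans
    (Measure.le_add_right (le_refl _))

theorem imPos_le (μ : ComplexMeasure G) :
    (ComplexMeasure.im μ).toJordanDecomposition.posPart ≤ cmAbs G μ :=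
  (Measure.le_add_right (le_refl _) :
      (ComplexMeasure.im μ).toJordanDecomposition.posPart ≤ (ComplexMeasure.im μ).totalVariation).trans
    (Measure.le_add_left (le_refl _))

theorem imNeg_le (μ : ComplexMeasure G) :
    (ComplexMeasure.im μ).toJordanDecomposition.negPart ≤ cmAbs G μ :=
  (Measure.le_add_left (le_refl _) :
      (ComplexMeasure.im μ).toJordanDecomposition.negPart ≤ (ComplexMeasure.im μ).totalVariation).trans
    (Measure.le_add_left (le_refl _))

variable {G}

theorem ae_norm_le_of_Lp_top {μ : Measure G} (f : Lp ℂ ⊤ μ) :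
    ∀ᵐ x ∂μ, ‖f x‖ ≤ ‖f‖ := by
  have h := enorm_ae_le_eLpNormEssSup (⇑f) μ
  filter_upwards [h] with x hx
  have hlt : eLpNormEssSup (⇑f) μ < ⊤ := by
    have h2 := Lp.eLpNorm_lt_top f
    rwa [eLpNorm_exponent_top] at h2
  have h3 : ((‖f x‖₊ : ℝ≥0∞)).toReal ≤ (eLpNormEssSup (⇑f) μ).toReal :=
    ENNReal.toReal_mono hlt.ne hx
  simpa [Lp.norm_def, eLpNorm_exponent_top] using h3

theorem integrable_part {μ : Measure G} {m : Measure G} [IsFiniteMeasure m] (hm : m ≤ μ)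
    (f : Lp ℂ ⊤ μ) : Integrable (⇑f) m :=
  MemLp.integrable le_top ((Lp.memLp f).mono_measure hm)

variable (G)

/-- The duality pairing between generalised functions and measures,
`⟨f, μ⟩ = ∫ f_μ dμ`. -/
def pair (f : GenFun G) (μ : MG G) : ℂ := cInt G μ.toCM ⇑(f.toFun μ)

theorem pair_add (f g : GenFun G) (μ : MG G) :
    pair G (f + g) μ = pair G f μ + pair G g μ := by
  have key : ∀ m : Measure G, m ≤ cmAbs G μ.toCM → IsFiniteMeasure m →
      ∫ x, ((f + g).toFun μ) x ∂m = (∫ x, (f.toFun μ) x ∂m) + ∫ x, (g.toFun μ) x ∂m := by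
    intro m hm hfin
    have hae : ⇑((f + g).toFun μ) =ᵐ[m] ⇑(f.toFun μ) + ⇑(g.toFun μ) := by
      exact (Measure.absolutelyContinuous_of_le hm).ae_le (Lp.coeFn_add (f.toFun μ) (g.toFun μ))
    rw [integral_congr_ae hae]
    exact integral_add (integrable_part hm (f.toFun μ)) (integrable_part hm (g.toFun μ))
  unfold pair cInt
  rw [key _ (rePos_le G μ.toCM) inferInstance, key _ (reNeg_le G μ.toCM) inferInstance,
    key _ (imPos_le G μ.toCM) inferInstance, key _ (imNeg_le G μ.toCM) inferInstance]
  ring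

theorem pair_smul (c : ℂ) (f : GenFun G) (μ : MG G) :
    pair G (c • f) μ = c * pair G f μ := by
  have key : ∀ m : Measure G, m ≤ cmAbs G μ.toCM →
      ∫ x, ((c • f).toFun μ) x ∂m = c * ∫ x, (f.toFun μ) x ∂m := by
    intro m hm
    have hae : ⇑((c • f).toFun μ) =ᵐ[m] c • ⇑(f.toFun μ) :=
      (Measure.absolutelyContinuous_of_le hm).ae_le (Lp.coeFn_smul c (f.toFun μ))
    rw [integral_congr_ae hae]
    simpa using integral_smul c (⇑(f.toFun μ))
  unfold pair cInt
  rw [key _ (rePos_le G μ.toCM), key _ (reNeg_le G μ.toCM),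
    key _ (imPos_le G μ.toCM), key _ (imNeg_le G μ.toCM)]
  ring

/-- The total mass bound associated to a measure. -/
def massBound (μ : MG G) : ℝ :=
  ((cmAbs G μ.toCM) Set.univ).toReal

theorem pair_norm_le (f : GenFun G) (μ : MG G) :
    ‖pair G f μ‖ ≤ 4 * massBound G μ * ‖f‖ := by
  have key : ∀ m : Measure G, m ≤ cmAbs G μ.toCM → IsFiniteMeasure m →
      ‖∫ x, (f.toFun μ) x ∂m‖ ≤ massBound G μ * ‖f‖ := by
    intro m hm hfin
    have hb : ∀ᵐ x ∂m, ‖(f.toFun μ) x‖ ≤ ‖f.toFun μ‖ :=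
      (Measure.absolutelyContinuous_of_le hm).ae_le (ae_norm_le_of_Lp_top (f.toFun μ))
    have h1 : ‖∫ x, (f.toFun μ) x ∂m‖ ≤ ‖f.toFun μ‖ * (m Set.univ).toReal :=
      norm_integral_le_of_norm_le_const hb
    have h2 : (m Set.univ).toReal ≤ massBound G μ := by
      refine ENNReal.toReal_mono (measure_ne_top _ _) (hm Set.univ)
    calc ‖∫ x, (f.toFun μ) x ∂m‖ ≤ ‖f.toFun μ‖ * (m Set.univ).toReal := h1
      _ ≤ ‖f‖ * massBound G μ := by
          apply mul_le_mul (GenFun.norm_le_gnorm f μ) h2 ENNReal.toReal_nonneg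
          exact (norm_nonneg _).trans (GenFun.norm_le_gnorm f μ)
      _ = massBound G μ * ‖f‖ := mul_comm _ _
  unfold pair cInt
  have k1 := key _ (rePos_le G μ.toCM) inferInstance
  have k2 := key _ (reNeg_le G μ.toCM) inferInstance
  have k3 := key _ (imPos_le G μ.toCM) inferInstance
  have k4 := key _ (imNeg_le G μ.toCM) inferInstance
  calc ‖_ + _‖ ≤ _ := norm_add_le _ _
    _ ≤ 4 * massBound G μ * ‖f‖ := by
        have e1 := norm_sub_le (∫ x, (f.toFun μ) x ∂(ComplexMeasure.re μ.toCM).toJordanDecomposition.posPart)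
          (∫ x, (f.toFun μ) x ∂(ComplexMeasure.re μ.toCM).toJordanDecomposition.negPart)
        have e2 := norm_sub_le (∫ x, (f.toFun μ) x ∂(ComplexMeasure.im μ.toCM).toJordanDecomposition.posPart)
          (∫ x, (f.toFun μ) x ∂(ComplexMeasure.im μ.toCM).toJordanDecomposition.negPart)
        have e3 : ‖Complex.I * ((∫ x, (f.toFun μ) x ∂(ComplexMeasure.im μ.toCM).toJordanDecomposition.posPart) -
            ∫ x, (f.toFun μ) x ∂(ComplexMeasure.im μ.toCM).toJordanDecomposition.negPart)‖ =
            ‖(∫ x, (f.toFun μ) x ∂(ComplexMeasure.im μ.toCM).toJordanDecomposition.posPart) -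
            ∫ x, (f.toFun μ) x ∂(ComplexMeasure.im μ.toCM).toJordanDecomposition.negPart‖ := by
          rw [norm_mul, Complex.norm_I, one_mul]
        rw [e3]
        nlinarith [k1, k2, k3, k4]

/-- The canonical embedding of `M(G)` into the dual of `GL(G)` (w.r.t. the
pairing `⟨f, η⟩ = ∫ f_η dη`), i.e. `Ψ⁻¹`-transpose. -/
def measFun (η : MG G) : GenFun G →L[ℂ] ℂ :=
  LinearMap.mkContinuous
    { toFun := fun f => pair G f η
      map_add' := fun f g => pair_add G f g η
      map_smul' := fun c f => pair_smul G c f η }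
    (4 * massBound G η) (fun f => pair_norm_le G f η)

end Pairing


/-- The dual space `GL₀(G)*`. -/
abbrev DualGL0 := ↥(GL0 G) →L[ℂ] ℂ

/-- The second dual `M(G)** = GL(G)*`. -/
abbrev DualGL := GenFun G →L[ℂ] ℂ

/-- The embedding of `M(G)` into `GL₀(G)*`. -/
def measFun0 (η : MG G) : DualGL0 G := (measFun G η).comp (GL0 G).subtypeL

/-- The restriction map `M(G)** → GL₀(G)*`. -/
def restrict0 (m : DualGL G) : DualGL0 G := m.comp (GL0 G).subtypeL


open scoped ZeroAtInfty

section Predicates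

/-- A generalised function is positive (in the C*-algebra sense), equivalently
all its coordinates are a.e. nonnegative. -/
def NonnegGF (f : GenFun G) : Prop :=
  ∀ μ : MG G, ∀ᵐ x ∂(cmAbs G μ.toCM), ∃ r : ℝ, 0 ≤ r ∧ (f.toFun μ) x = r

/-- A complex measure is positive. -/
def NonnegCM (μ : ComplexMeasure G) : Prop :=
  ∀ A : Set G, MeasurableSet A → ∃ r : ℝ, 0 ≤ r ∧ μ A = r

/-- `g` represents the pointwise function `u` as a generalised function. -/
def IsRepFun (u : G → ℂ) (g : GenFun G) : Prop :=
  ∀ μ : MG G, ⇑(g.toFun μ) =ᵐ[cmAbs G μ.toCM] u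

/-- `g = χ_K ⬝ f` coordinatewise. -/
def IsIndMul (K : Set G) (f g : GenFun G) : Prop :=
  ∀ μ : MG G, ⇑(g.toFun μ) =ᵐ[cmAbs G μ.toCM] K.indicator ⇑(f.toFun μ)

/-- `g = u ⬝ f` coordinatewise. -/
def IsMulFun (u : G → ℂ) (f g : GenFun G) : Prop :=
  ∀ μ : MG G, ⇑(g.toFun μ) =ᵐ[cmAbs G μ.toCM] fun x => u x * (f.toFun μ) x

/-- `conv` is the convolution product of `M(G)`:
`⟨μ ∗ ν, g⟩ = ∫∫ g(xy) dμ(x) dν(y)` for `g ∈ C₀(G)`. -/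
def IsConvOp (conv : MG G → MG G → MG G) : Prop :=
  ∀ μ ν : MG G, ∀ g : C₀(G, ℂ),
    cInt G (conv μ ν).toCM ⇑g = cInt G μ.toCM fun x => cInt G ν.toCM fun y => g (x * y)

/-- `circ ζ f` is the generalised function `ζ ∘ f`, satisfying
`⟨ζ ∘ f, μ⟩ = ⟨f, ζ ∗ μ⟩`. -/
def IsLCirc (conv : MG G → MG G → MG G) (circ : MG G → GenFun G → GenFun G) : Prop :=
  ∀ (ζ : MG G) (f : GenFun G) (μ : MG G), pair G (circ ζ f) μ = pair G f (conv ζ μ)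

/-- `rcirc f ζ` is the generalised function `f ∘ ζ`, satisfying
`⟨f ∘ ζ, μ⟩ = ⟨f, μ ∗ ζ⟩`. -/
def IsRCirc (conv : MG G → MG G → MG G) (rcirc : GenFun G → MG G → GenFun G) : Prop :=
  ∀ (f : GenFun G) (ζ : MG G) (μ : MG G), pair G (rcirc f ζ) μ = pair G f (conv μ ζ)

/-- The map `ζ ∘ ·` restricted to `GL₀(G)` (by Lemma 3.3 it maps `GL₀(G)` to
itself). -/
def IsLCirc0 (conv : MG G → MG G → MG G) (circ0 : MG G → ↥(GL0 G) → ↥(GL0 G)) : Prop :=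
  ∀ (ζ : MG G) (f : ↥(GL0 G)) (μ : MG G), pair G (circ0 ζ f : GenFun G) μ = pair G (f : GenFun G) (conv ζ μ)

/-- The map `· ∘ ζ` restricted to `GL₀(G)`. -/
def IsRCirc0 (conv : MG G → MG G → MG G) (rcirc0 : ↥(GL0 G) → MG G → ↥(GL0 G)) : Prop :=
  ∀ (f : ↥(GL0 G)) (ζ : MG G) (μ : MG G), pair G (rcirc0 f ζ : GenFun G) μ = pair G (f : GenFun G) (conv μ ζ)

/-- `lt0 n f` is the generalised function `n·f ∈ GL₀(G)` determined by
`⟨n f, ζ⟩ = ⟨n, ζ ∘ f⟩`. -/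
def IsLT0 (circ0 : MG G → ↥(GL0 G) → ↥(GL0 G)) (lt0 : DualGL0 G → ↥(GL0 G) → ↥(GL0 G)) : Prop :=
  ∀ (n : DualGL0 G) (f : ↥(GL0 G)) (ζ : MG G),
    pair G (lt0 n f : GenFun G) ζ = n (circ0 ζ f)

/-- The Arens-type product `⊙` on `GL₀(G)*`: `⟨m ⊙ n, f⟩ = ⟨m, n f⟩`. -/
def IsOdot0 (lt0 : DualGL0 G → ↥(GL0 G) → ↥(GL0 G))
    (odot : DualGL0 G → DualGL0 G → DualGL0 G) : Prop :=
  ∀ (m n : DualGL0 G) (f : ↥(GL0 G)), odot m n f = m (lt0 n f)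

/-- `ltF n f` is the generalised function `n·f` determined by
`⟨n f, ζ⟩ = ⟨n, ζ ∘ f⟩`, for `n ∈ M(G)** = GL(G)*`. -/
def IsLTF (circ : MG G → GenFun G → GenFun G) (ltF : DualGL G → GenFun G → GenFun G) : Prop :=
  ∀ (n : DualGL G) (f : GenFun G) (ζ : MG G), pair G (ltF n f) ζ = n (circ ζ f)

/-- The first Arens product `⊙` on `M(G)**`: `⟨m ⊙ n, f⟩ = ⟨m, n f⟩`. -/
def IsOdotF (ltF : DualGL G → GenFun G → GenFun G)
    (odotF : DualGL G → DualGL G → DualGL G) : Prop :=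
  ∀ (m n : DualGL G) (f : GenFun G), odotF m n f = m (ltF n f)

/-- A functional in `GL₀(G)*` has compact carrier `K`. -/
def HasCarrier0 (m : DualGL0 G) (K : Set G) : Prop :=
  IsCompact K ∧ ∀ f g : ↥(GL0 G), IsIndMul G K (f : GenFun G) (g : GenFun G) → m g = m f

/-- A functional in `M(G)**` has compact carrier `K`. -/
def HasCarrierF (m : DualGL G) (K : Set G) : Prop :=
  IsCompact K ∧ ∀ f g : GenFun G, IsIndMul G K f g → m g = m f

/-- `M_c(G)**`, the norm closure of the set of functionals with compact carrier
in `M(G)**`. -/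
def McSet : Set (DualGL G) := closure {m : DualGL G | ∃ K : Set G, HasCarrierF G m K}

/-- A positive functional. -/
def IsPosFunc0 (m : DualGL0 G) : Prop :=
  ∀ f : ↥(GL0 G), NonnegGF G (f : GenFun G) → ∃ r : ℝ, 0 ≤ r ∧ m f = r

/-- A positive functional on `GL(G)`. -/
def IsPosFuncF (m : DualGL G) : Prop :=
  ∀ f : GenFun G, NonnegGF G f → ∃ r : ℝ, 0 ≤ r ∧ m f = r

/-- The operator `T` maps the unit ball of `S` into a norm-compact set
(relative compactness of the image of the unit ball). -/
def CCBallOn (T : DualGL0 G → DualGL0 G) (S : Set (DualGL0 G)) : Prop :=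
  ∃ K : Set (DualGL0 G), IsCompact K ∧ ∀ n ∈ S, ‖n‖ ≤ 1 → T n ∈ K

/-- The operator `T` maps the unit ball of `S` into a weakly compact set. -/
def WCCBallOn (T : DualGL0 G → DualGL0 G) (S : Set (DualGL0 G)) : Prop :=
  ∃ K : Set (WeakSpace ℂ (DualGL0 G)), IsCompact K ∧
    ∀ n ∈ S, ‖n‖ ≤ 1 → toWeakSpace ℂ (DualGL0 G) (T n) ∈ K

/-- The image of `M_a(G)` in `GL₀(G)*`. -/
def MaSet (lam : Measure G) : Set (DualGL0 G) :=
  {n : DualGL0 G | ∃ σ : MG G, cmAbs G σ.toCM ≪ lam ∧ n = measFun0 G σ}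

end Predicates

end GLpaper

open GLpaper

/-!
If `G` is not compact, take an ultrafilter `U` finer than the cocompact filter and a weak-* limit
`m` along `U` of the point masses `δ_y` (Banach–Alaoglu). Regular complex measures are determined
by their integrals against `C₀(G)` (uniqueness in the Riesz–Markov–Kakutani theorem), so
`δ_y ∗ δ_1 = δ_1 ∗ δ_y = δ_y`, and therefore `m ⊙ δ_1 = δ_1 ⊙ m = m`. Since `δ_1` has compact
carrier `{1}`, either ideal property would put `m` into `M_c(G)**`. But `m(χ_{G∖K}) = 1` for every
compact `K`, whereas a functional with carrier `K` vanishes on `χ_{G∖K}`, which has norm at most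
`1`; so `m` is at distance at least `1` from every such functional. If `G` is compact, every
functional has carrier `G`.
-/

open scoped CompactlySupported ZeroAtInfty

namespace MeasureTheory

variable {X : Type*} [MeasurableSpace X]

theorem Measure.toSignedMeasure_toJordanDecomposition (μ : Measure X) [IsFiniteMeasure μ] :
    μ.toSignedMeasure.toJordanDecomposition = ⟨μ, 0, Measure.MutuallySingular.zero_right⟩ := by
  have h : μ.toSignedMeasure =
      (⟨μ, 0, Measure.MutuallySingular.zero_right⟩ : JordanDecomposition X).toSignedMeasure := by
    rw [JordanDecomposition.toSignedMeasure, Measure.toSignedMeasure_zero, sub_zero]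
  rw [h, JordanDecomposition.toJordanDecomposition_toSignedMeasure]

theorem norm_indicatorConstLp_top_le {E : Type*} [NormedAddCommGroup E] {μ : Measure X}
    {s : Set X} (hs : MeasurableSet s) (hμs : μ s ≠ ∞) (c : E) :
    ‖indicatorConstLp ∞ hs hμs c‖ ≤ ‖c‖ :=
  norm_indicatorConstLp_le.trans_eq (by simp)

variable [TopologicalSpace X]

theorem Measure.InnerRegular.of_le [OpensMeasurableSpace X] [T2Space X] {μ ν : Measure X}
    [IsFiniteMeasure ν] [ν.InnerRegular] (h : μ ≤ ν) : μ.InnerRegular := by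
  constructor
  intro s hs r hr
  obtain ⟨ε, hε, hrε⟩ := ENNReal.lt_iff_exists_add_pos_lt.mp hr
  obtain ⟨K, hKs, hK, hνK⟩ := hs.exists_isCompact_sdiff_lt (measure_ne_top ν s)
    (ENNReal.coe_ne_zero.mpr hε.ne')
  refine ⟨K, hKs, hK, (ENNReal.add_lt_add_iff_right (a := (ε : ℝ≥0∞)) ENNReal.coe_ne_top).mp ?_⟩
  calc r + ε < μ s := hrε
    _ ≤ μ (s ∩ K) + μ (s \ K) := measure_le_inter_add_sdiff μ s K
    _ ≤ μ K + ν (s \ K) := add_le_add (measure_mono inter_subset_right) (h _)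
    _ < μ K + ε := ENNReal.add_lt_add_left ((h K).trans_lt (measure_lt_top ν K)).ne hνK

instance Measure.InnerRegular.dirac (x : X) : (Measure.dirac x).InnerRegular := by
  constructor
  intro s hs r hr
  have hx : x ∈ s := by
    by_contra hx
    simp [Measure.dirac_apply' x hs, hx] at hr
  exact ⟨{x}, singleton_subset_iff.mpr hx, isCompact_singleton,
    hr.trans_le (by rw [Measure.dirac_apply_of_mem (mem_singleton x)]; exact prob_le_one)⟩

variable [T2Space X]

instance SignedMeasure.innerRegular_posPart [OpensMeasurableSpace X] (s : SignedMeasure X)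
    [s.totalVariation.InnerRegular] : s.toJordanDecomposition.posPart.InnerRegular :=
  .of_le (ν := s.totalVariation) (Measure.le_add_right le_rfl)

instance SignedMeasure.innerRegular_negPart [OpensMeasurableSpace X] (s : SignedMeasure X)
    [s.totalVariation.InnerRegular] : s.toJordanDecomposition.negPart.InnerRegular :=
  .of_le (ν := s.totalVariation) (Measure.le_add_left le_rfl)

variable [LocallyCompactSpace X] [BorelSpace X]

theorem SignedMeasure.ext_of_integral_eq_on_compactlySupported {s t : SignedMeasure X}
    [s.totalVariation.InnerRegular] [t.totalVariation.InnerRegular]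
    (h : ∀ f : C_c(X, ℝ),
      ∫ x, f x ∂s.toJordanDecomposition.posPart - ∫ x, f x ∂s.toJordanDecomposition.negPart =
        ∫ x, f x ∂t.toJordanDecomposition.posPart - ∫ x, f x ∂t.toJordanDecomposition.negPart) :
    s = t := by
  have hsum : s.toJordanDecomposition.posPart + t.toJordanDecomposition.negPart =
      s.toJordanDecomposition.negPart + t.toJordanDecomposition.posPart := by
    refine Measure.ext_of_integral_eq_on_compactlySupported fun f => ?_
    rw [integral_add_measure f.integrable f.integrable,
      integral_add_measure f.integrable f.integrable]
    linarith [h f]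
  rw [← s.toSignedMeasure_toJordanDecomposition, ← t.toSignedMeasure_toJordanDecomposition,
    JordanDecomposition.toSignedMeasure, JordanDecomposition.toSignedMeasure,
    sub_eq_sub_iff_add_eq_add, ← Measure.toSignedMeasure_add, ← Measure.toSignedMeasure_add]
  exact Measure.toSignedMeasure_congr (hsum.trans (add_comm _ _))

end MeasureTheory

theorem ContinuousLinearMap.exists_tendsto_apply_of_norm_le {ι 𝕜 E : Type*}
    [NontriviallyNormedField 𝕜] [ProperSpace 𝕜] [SeminormedAddCommGroup E] [NormedSpace 𝕜 E]
    (U : Ultrafilter ι) {φ : ι → StrongDual 𝕜 E} {C : ℝ} (hφ : ∀ i, ‖φ i‖ ≤ C) :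
    ∃ m : StrongDual 𝕜 E, ∀ x, Tendsto (fun i => φ i x) U (𝓝 (m x)) := by
  obtain ⟨m, -, hm⟩ := (WeakDual.isCompact_closedBall (0 : StrongDual 𝕜 E) C).ultrafilter_le_nhds
    (U.map fun i => StrongDual.toWeakDual (φ i))
    (by
      rw [le_principal_iff, Ultrafilter.mem_coe, Ultrafilter.mem_map]
      exact Filter.univ_mem' fun i => by simpa using hφ i)
  have hm' : Tendsto (fun i => StrongDual.toWeakDual (φ i)) U (𝓝 m) := by
    rwa [Tendsto, ← Ultrafilter.coe_map]
  exact ⟨WeakDual.toStrongDual m, fun x => ((WeakDual.eval_continuous x).tendsto m).comp hm'⟩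

namespace GLpaper

section

variable {G : Type} [MeasurableSpace G]

theorem cInt_ofReal (μ : ComplexMeasure G) (f : G → ℝ) :
    cInt G μ (fun x => (f x : ℂ)) =
      ((∫ x, f x ∂(ComplexMeasure.re μ).toJordanDecomposition.posPart -
          ∫ x, f x ∂(ComplexMeasure.re μ).toJordanDecomposition.negPart : ℝ) : ℂ) +
        I * ((∫ x, f x ∂(ComplexMeasure.im μ).toJordanDecomposition.posPart -
          ∫ x, f x ∂(ComplexMeasure.im μ).toJordanDecomposition.negPart : ℝ) : ℂ) := by
  simp only [cInt, integral_complex_ofReal, Complex.ofReal_sub]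

theorem cmAbs_toComplexMeasure (μ : Measure G) [IsFiniteMeasure μ] :
    cmAbs G (μ.toSignedMeasure.toComplexMeasure 0) = μ := by
  simp only [cmAbs, SignedMeasure.totalVariation, SignedMeasure.re_toComplexMeasure,
    SignedMeasure.im_toComplexMeasure, Measure.toSignedMeasure_toJordanDecomposition,
    SignedMeasure.toJordanDecomposition_zero]
  simp

theorem cInt_toComplexMeasure (μ : Measure G) [IsFiniteMeasure μ] (g : G → ℂ) :
    cInt G (μ.toSignedMeasure.toComplexMeasure 0) g = ∫ x, g x ∂μ := by
  simp only [cInt, SignedMeasure.re_toComplexMeasure, SignedMeasure.im_toComplexMeasure,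
    Measure.toSignedMeasure_toJordanDecomposition, SignedMeasure.toJordanDecomposition_zero]
  simp

variable [TopologicalSpace G]

def GenFun.indicator (s : Set G) (hs : MeasurableSet s) : GenFun G where
  toFun μ := indicatorConstLp ⊤ hs (measure_ne_top _ s) 1
  compat μ ν h := indicatorConstLp_coeFn.trans (indicatorConstLp_coeFn.filter_mono h.ae_le).symm
  bdd := ⟨1, by rintro _ ⟨μ, rfl⟩; simpa using norm_indicatorConstLp_top_le hs _ (1 : ℂ)⟩

theorem GenFun.coeFn_indicator (s : Set G) (hs : MeasurableSet s) (μ : MG G) :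
    ⇑((GenFun.indicator s hs).toFun μ) =ᵐ[cmAbs G μ.toCM] s.indicator 1 :=
  indicatorConstLp_coeFn (hs := hs) (hμs := measure_ne_top _ s)

namespace MG

def ofMeasure (μ : Measure G) [IsFiniteMeasure μ] [μ.Regular] : MG G :=
  ⟨μ.toSignedMeasure.toComplexMeasure 0, by rw [cmAbs_toComplexMeasure]; infer_instance⟩

variable [T2Space G] [BorelSpace G]

def dirac (x : G) : MG G := ofMeasure (Measure.dirac x)

theorem cmAbs_dirac (x : G) : cmAbs G (dirac x).toCM = Measure.dirac x :=
  cmAbs_toComplexMeasure _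

theorem cInt_dirac (x : G) (g : G → ℂ) : cInt G (dirac x).toCM g = g x := by
  rw [dirac, ofMeasure, cInt_toComplexMeasure, integral_dirac]

instance innerRegular_totalVariation_re (μ : MG G) :
    (ComplexMeasure.re μ.toCM).totalVariation.InnerRegular :=
  haveI := μ.regular
  .of_le (ν := cmAbs G μ.toCM) (Measure.le_add_right le_rfl)

instance innerRegular_totalVariation_im (μ : MG G) :
    (ComplexMeasure.im μ.toCM).totalVariation.InnerRegular :=
  haveI := μ.regular
  .of_le (ν := cmAbs G μ.toCM) (Measure.le_add_left le_rfl)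

theorem ext_of_cInt_eq [LocallyCompactSpace G] {ν η : MG G}
    (h : ∀ g : C₀(G, ℂ), cInt G ν.toCM g = cInt G η.toCM g) : ν = η := by
  have hreal (f : C_c(G, ℝ)) :
      cInt G ν.toCM (fun x => (f x : ℂ)) = cInt G η.toCM (fun x => (f x : ℂ)) := by
    refine h ⟨⟨fun x => (f x : ℂ), by fun_prop⟩, ?_⟩
    rw [← Complex.ofReal_zero]
    exact (Complex.continuous_ofReal.tendsto 0).comp
      (HasCompactSupport.is_zero_at_infty f.hasCompactSupport)
  have hre : ComplexMeasure.re ν.toCM = ComplexMeasure.re η.toCM :=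
    SignedMeasure.ext_of_integral_eq_on_compactlySupported fun f => by
      simpa [cInt_ofReal] using congrArg Complex.re (hreal f)
  have him : ComplexMeasure.im ν.toCM = ComplexMeasure.im η.toCM :=
    SignedMeasure.ext_of_integral_eq_on_compactlySupported fun f => by
      simpa [cInt_ofReal] using congrArg Complex.im (hreal f)
  cases ν; cases η
  congr
  exact ComplexMeasure.equivSignedMeasure.injective (Prod.ext hre him)

end MG

variable [T2Space G] [BorelSpace G]

theorem pair_dirac (f : GenFun G) (y : G) : pair G f (MG.dirac y) = f.toFun (MG.dirac y) y := by
  rw [pair, MG.cInt_dirac]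

theorem pair_dirac_of_ae_eq {f : GenFun G} {y : G} {u : G → ℂ}
    (h : ⇑(f.toFun (MG.dirac y)) =ᵐ[cmAbs G (MG.dirac y).toCM] u) :
    pair G f (MG.dirac y) = u y := by
  have h' : ∀ᶠ x in pure y, f.toFun (MG.dirac y) x = u x := by
    rw [← ae_dirac_eq, ← MG.cmAbs_dirac]
    exact h
  rw [pair_dirac]
  exact h'

theorem pair_indicator_dirac (s : Set G) (hs : MeasurableSet s) (y : G) :
    pair G (GenFun.indicator s hs) (MG.dirac y) = s.indicator 1 y :=
  pair_dirac_of_ae_eq (GenFun.coeFn_indicator s hs _)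

end

section

variable {G : Type} [Group G] [TopologicalSpace G] [MeasurableSpace G]

theorem GenFun.norm_indicator_le (s : Set G) (hs : MeasurableSet s) :
    ‖GenFun.indicator s hs‖ ≤ 1 :=
  GenFun.gnorm_le zero_le_one fun _ =>
    (norm_indicatorConstLp_top_le hs (measure_ne_top _ s) 1).trans_eq norm_one

theorem McSet_eq_univ [CompactSpace G] : McSet G = univ := by
  refine eq_univ_of_forall fun m => subset_closure ⟨univ, isCompact_univ, fun f g hfg => ?_⟩
  congr 1
  exact GenFun.ext' fun μ => Lp.ext (by simpa using hfg μ)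

variable [T2Space G] [BorelSpace G]

theorem measFun_apply (η : MG G) (f : GenFun G) : measFun G η f = pair G f η := rfl

theorem norm_measFun_dirac_le (y : G) : ‖measFun G (MG.dirac y)‖ ≤ 4 := by
  have h : massBound G (MG.dirac y) = 1 := by simp [massBound, MG.cmAbs_dirac]
  unfold measFun
  exact (LinearMap.mkContinuous_norm_le _ (by rw [h]; norm_num) _).trans_eq (by rw [h, mul_one])

theorem measFun_dirac_mem_McSet (x : G) : measFun G (MG.dirac x) ∈ McSet G := by
  refine subset_closure ⟨{x}, isCompact_singleton, fun f g hfg => ?_⟩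
  change pair G g (MG.dirac x) = pair G f (MG.dirac x)
  rw [pair_dirac_of_ae_eq (hfg _), indicator_of_mem (mem_singleton x), pair_dirac]

theorem notMem_McSet_of_apply_indicator_compl {p : DualGL G}
    (hp : ∀ (K : Set G) (hK : IsCompact K),
      p (GenFun.indicator Kᶜ hK.isClosed.measurableSet.compl) = 1) :
    p ∉ McSet G := by
  intro hmem
  obtain ⟨q, ⟨K, hK, hqK⟩, hpq⟩ := Metric.mem_closure_iff.mp hmem 1 one_pos
  set χ := GenFun.indicator Kᶜ hK.isClosed.measurableSet.compl
  have hq : q χ = 0 := by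
    have hχ : IsIndMul G K χ 0 := fun μ => by
      filter_upwards [Lp.coeFn_zero ℂ ⊤ (cmAbs G μ.toCM),
        GenFun.coeFn_indicator Kᶜ hK.isClosed.measurableSet.compl μ] with y h0 h1
      by_cases hy : y ∈ K <;> simp_all [χ]
    simpa using (hqK χ 0 hχ).symm
  have : ‖(p - q) χ‖ ≤ ‖p - q‖ := by
    simpa using (p - q).le_opNorm χ |>.trans
      (mul_le_of_le_one_right (norm_nonneg _) (GenFun.norm_indicator_le _ _))
  rw [sub_apply, hp K hK, hq, sub_zero, norm_one, ← dist_eq_norm] at this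
  exact this.not_gt hpq

variable {F : Filter G} {m : DualGL G}

theorem notMem_McSet_of_tendsto_pair_dirac (hF : F ≤ cocompact G) [F.NeBot]
    (hm : ∀ f, Tendsto (fun y => pair G f (MG.dirac y)) F (𝓝 (m f))) : m ∉ McSet G :=
  notMem_McSet_of_apply_indicator_compl fun K hK =>
    tendsto_nhds_unique (hm _) <| tendsto_const_nhds.congr' <|
      eventually_of_mem (hF hK.compl_mem_cocompact) fun y hy => by
        simp only [pair_indicator_dirac, indicator_of_mem hy, Pi.one_apply]

variable [LocallyCompactSpace G]

theorem IsConvOp.conv_dirac {conv : MG G → MG G → MG G} (hconv : IsConvOp G conv) (x y : G) :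
    conv (MG.dirac x) (MG.dirac y) = MG.dirac (x * y) :=
  MG.ext_of_cInt_eq fun g => by
    rw [hconv]
    simp only [MG.cInt_dirac]

variable {conv : MG G → MG G → MG G} {circ : MG G → GenFun G → GenFun G}
  {ltF : DualGL G → GenFun G → GenFun G} {odotF : DualGL G → DualGL G → DualGL G} [F.NeBot]

theorem odotF_measFun_dirac_one (hconv : IsConvOp G conv) (hcirc : IsLCirc G conv circ)
    (hltF : IsLTF G circ ltF) (hodotF : IsOdotF G ltF odotF)
    (hm : ∀ f, Tendsto (fun y => pair G f (MG.dirac y)) F (𝓝 (m f))) :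
    odotF m (measFun G (MG.dirac 1)) = m := by
  ext f
  rw [hodotF]
  refine tendsto_nhds_unique (hm _) ((hm f).congr fun y => ?_)
  rw [hltF, measFun_apply, hcirc, hconv.conv_dirac, mul_one]

theorem measFun_dirac_one_odotF (hconv : IsConvOp G conv) (hcirc : IsLCirc G conv circ)
    (hltF : IsLTF G circ ltF) (hodotF : IsOdotF G ltF odotF)
    (hm : ∀ f, Tendsto (fun y => pair G f (MG.dirac y)) F (𝓝 (m f))) :
    odotF (measFun G (MG.dirac 1)) m = m := by
  ext f
  rw [hodotF, measFun_apply]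
  refine (hltF _ _ _).trans (tendsto_nhds_unique (hm _) ((hm f).congr fun y => ?_))
  rw [hcirc, hconv.conv_dirac, one_mul]

end

end GLpaper

theorem stmt_12_general (G : Type) [Group G] [TopologicalSpace G]
    [LocallyCompactSpace G] [T2Space G] [MeasurableSpace G] [BorelSpace G]
    (conv : MG G → MG G → MG G) (hconv : IsConvOp G conv)
    (circ : MG G → GenFun G → GenFun G) (hcirc : IsLCirc G conv circ)
    (ltF : DualGL G → GenFun G → GenFun G) (hltF : IsLTF G circ ltF)
    (odotF : DualGL G → DualGL G → DualGL G) (hodotF : IsOdotF G ltF odotF) :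
    ((∀ m n : DualGL G, n ∈ McSet G → odotF m n ∈ McSet G) ∨
      (∀ m n : DualGL G, m ∈ McSet G → odotF m n ∈ McSet G)) ↔
    CompactSpace G := by
  refine ⟨fun hideal => ?_, fun _ => Or.inl fun m n _ => McSet_eq_univ (G := G) ▸ mem_univ _⟩
  by_contra hG
  have : NoncompactSpace G := not_compactSpace_iff.mp hG
  let U := Ultrafilter.of (cocompact G)
  obtain ⟨m, hm⟩ :=
    ContinuousLinearMap.exists_tendsto_apply_of_norm_le U (norm_measFun_dirac_le (G := G))
  refine notMem_McSet_of_tendsto_pair_dirac (Ultrafilter.of_le _) hm ?_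
  rcases hideal with hleft | hright
  · simpa only [odotF_measFun_dirac_one hconv hcirc hltF hodotF hm] using
      hleft m _ (measFun_dirac_mem_McSet 1)
  · simpa only [measFun_dirac_one_odotF hconv hcirc hltF hodotF hm] using
      hright _ m (measFun_dirac_mem_McSet 1)

/-- `GL₀(G)*` (identified with `M_c(G)**`) is a left ideal,
or a right ideal, of `(M(G)**, ⊙)` if and only if `G` is compact. -/
theorem stmt_12 (G : Type) [Group G] [TopologicalSpace G] [IsTopologicalGroup G]
    [LocallyCompactSpace G] [T2Space G] [MeasurableSpace G] [BorelSpace G]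
    (conv : MG G → MG G → MG G) (hconv : IsConvOp G conv)
    (circ : MG G → GenFun G → GenFun G) (hcirc : IsLCirc G conv circ)
    (ltF : DualGL G → GenFun G → GenFun G) (hltF : IsLTF G circ ltF)
    (odotF : DualGL G → DualGL G → DualGL G) (hodotF : IsOdotF G ltF odotF) :
    ((∀ m n : DualGL G, n ∈ McSet G → odotF m n ∈ McSet G) ∨
      (∀ m n : DualGL G, m ∈ McSet G → odotF m n ∈ McSet G)) ↔
    CompactSpace G :=
  stmt_12_general G conv hconv circ hcirc ltF hltF odotF hodotF

end
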